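/- If x_1, ..., x_L are vectors in R^N with 2L ≤ N, then ‖x_1 ∧ x_2 ∧ ⋯ ∧ x_L‖_1 ≤ 2^L δ(x_1) δ(x_2) ⋯ δ(x_L). -/

import Mathlib

/-! Expanding every minor by the Leibniz formula, the pairs (L-subset `I`, permutation `σ`)
index distinct maps `Fin L → Fin N` (the enumeration of `I` composed with `σ`), so
`‖x₁ ∧ ⋯ ∧ x_L‖₁ ≤ ∑_f ∏_j |x_j(f j)| = ∏_l ‖x_l‖₁`. Finally `‖x‖₁ = Σ xₘ⁺ + Σ xₙ⁻ ≤ 2 δ(x)`. -/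

open Finset in
/-- The Schinzel norm `δ(x) = max{Σ xₘ⁺, Σ xₙ⁻}` on `ℝ^N`. -/
noncomputable def schinzelDelta {N : ℕ} (x : Fin N → ℝ) : ℝ :=
  max (∑ m, max (x m) 0) (∑ n, max (-(x n)) 0)

/-- The set `E_N = {±e_m}` of signed standard basis vectors. -/
def schE (N : ℕ) : Set (Fin N → ℝ) :=
  {x | ∃ m, x = Pi.single m 1 ∨ x = -Pi.single m 1}

/-- The set `F_N = {e_m − e_n : m ≠ n}`. -/
def schF (N : ℕ) : Set (Fin N → ℝ) :=
  {x | ∃ m n, m ≠ n ∧ x = Pi.single m 1 - Pi.single n 1}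

open Finset in
/-- The `ℓ¹`-norm of the exterior product `x₁ ∧ ⋯ ∧ x_L`: the sum, over all
`L`-element subsets `I ⊆ {1,…,N}`, of the absolute values of the `L×L` minors
(rows indexed by `I`) of the `N×L` matrix with columns `x₁,…,x_L`. -/
noncomputable def wedgeL1 {N L : ℕ} (x : Fin L → Fin N → ℝ) : ℝ :=
  ∑ I : Finset (Fin N), if h : I.card = L then
    |(Matrix.of fun i j => x j ((I.orderIsoOfFin h i : Fin N))).det| else 0

open Finset

theorem Matrix.abs_det_le_sum_prod_abs {n R : Type*} [Fintype n] [DecidableEq n]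
    [CommRing R] [LinearOrder R] [IsStrictOrderedRing R] (M : Matrix n n R) :
    |M.det| ≤ ∑ σ : Equiv.Perm n, ∏ i, |M (σ i) i| := by
  rw [Matrix.det_apply]
  refine (abs_sum_le_sum_abs _ _).trans_eq (sum_congr rfl fun σ _ => ?_)
  rcases Int.units_eq_one_or (Equiv.Perm.sign σ) with h | h <;> simp [h, abs_prod]

theorem sum_comp_perm_le_sum_filter_image_eq {ι α M : Type*} [Fintype ι] [DecidableEq ι]
    [Fintype α] [DecidableEq α] [AddCommMonoid M] [PartialOrder M] [IsOrderedAddMonoid M]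
    (e : ι ↪ α) (g : (ι → α) → M) (hg : ∀ f, 0 ≤ g f) :
    ∑ σ : Equiv.Perm ι, g (e ∘ σ) ≤ ∑ f with univ.image f = univ.image e, g f := by
  let compose : Equiv.Perm ι ↪ (ι → α) :=
    ⟨fun σ => e ∘ σ, fun σ τ hστ => Equiv.ext fun i => e.injective (congrFun hστ i)⟩
  refine (sum_map univ compose g).symm.trans_le <|
    sum_le_sum_of_subset_of_nonneg (fun f hf => ?_) fun f _ _ => hg f
  obtain ⟨σ, -, rfl⟩ := mem_map.mp hf
  refine mem_filter.mpr ⟨mem_univ _, ?_⟩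
  change univ.image (e ∘ σ) = _
  rw [← image_image, image_univ_equiv]

theorem wedgeL1_le_sum_prod_abs {N L : ℕ} (x : Fin L → Fin N → ℝ) :
    wedgeL1 x ≤ ∑ f : Fin L → Fin N, ∏ j, |x j (f j)| := by
  rw [wedgeL1, ← sum_fiberwise univ (fun f => univ.image f)]
  refine sum_le_sum fun I _ => ?_
  split_ifs with h
  · calc _ ≤ ∑ σ : Equiv.Perm (Fin L), ∏ j, |x j (I.orderEmbOfFin h (σ j))| :=
          Matrix.abs_det_le_sum_prod_abs _
      _ ≤ _ := by
          simpa using sum_comp_perm_le_sum_filter_image_eq (I.orderEmbOfFin h).toEmbedding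
            (fun f => ∏ j, |x j (f j)|) fun f => by positivity
  · exact sum_nonneg fun f _ => by positivity

theorem wedgeL1_le_prod_sum_abs {N L : ℕ} (x : Fin L → Fin N → ℝ) :
    wedgeL1 x ≤ ∏ l, ∑ i, |x l i| :=
  (wedgeL1_le_sum_prod_abs x).trans_eq (Fintype.prod_sum fun l i => |x l i|).symm

theorem sum_abs_le_two_mul_schinzelDelta {N : ℕ} (x : Fin N → ℝ) :
    ∑ i, |x i| ≤ 2 * schinzelDelta x :=
  calc ∑ i, |x i| = ∑ i, max (x i) 0 + ∑ i, max (-x i) 0 := by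
        simp only [← sum_add_distrib, max_zero_add_max_neg_zero_eq_abs_self]
    _ ≤ schinzelDelta x + schinzelDelta x := add_le_add (le_max_left _ _) (le_max_right _ _)
    _ = 2 * schinzelDelta x := (two_mul _).symm

theorem stmt12_general (N L : ℕ) (x : Fin L → Fin N → ℝ) :
    wedgeL1 x ≤ 2 ^ L * ∏ l, schinzelDelta (x l) :=
  calc wedgeL1 x ≤ ∏ l, ∑ i, |x l i| := wedgeL1_le_prod_sum_abs x
    _ ≤ ∏ l, 2 * schinzelDelta (x l) :=
        prod_le_prod (fun l _ => sum_nonneg fun i _ => abs_nonneg _)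
          fun l _ => sum_abs_le_two_mul_schinzelDelta (x l)
    _ = 2 ^ L * ∏ l, schinzelDelta (x l) := by simp [prod_mul_distrib]

/-- If `2L ≤ N` then `‖x₁ ∧ ⋯ ∧ x_L‖₁ ≤ 2^L δ(x₁)⋯δ(x_L)` for all `x₁,…,x_L ∈ ℝ^N`. -/
theorem stmt12 (N L : ℕ) (h : 2 * L ≤ N) (x : Fin L → Fin N → ℝ) :
    wedgeL1 x ≤ 2 ^ L * ∏ l, schinzelDelta (x l) :=
  stmt12_general N L x
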